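/- arXiv:1407.8068 — 2 statements merged into one kernel-verified Lean document; each statement's English description precedes it below -/
import Mathlib

section
/- There exists an integer n_H ≥ 2 such that for every n ≥ n_H one has ∑_{i=1}^{n−1} j_n(i) − g_n > 0 (equivalently, in the N-fractional binary market the up-jump value u_n^{(N)}(−1,…,−1) = (−∑_{i=1}^{n−1} j_n(i) + g_n)/N^H is strictly negative for all N ≥ n). -/
open MeasureTheory

/-- The normalizing constant `c_H`. -/
noncomputable def cH (H : ℝ) : ℝ :=
  Real.sqrt (2 * H * Real.Gamma (3/2 - H) / (Real.Gamma (H + 1/2) * Real.Gamma (2 - 2*H)))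

/-- The coefficient `j_n(i)` of the disturbed random walk. -/
noncomputable def jn (H σ : ℝ) (n i : ℕ) : ℝ :=
  σ * cH H * (H - 1/2) *
    ∫ x in ((i : ℝ) - 1)..(i : ℝ),
      x ^ ((1:ℝ)/2 - H) *
        ∫ v in (0:ℝ)..1, (v + n - 1) ^ (H - 1/2) * (v + n - 1 - x) ^ (H - 3/2)

/-- The coefficient `g_n` of the disturbed random walk. -/
noncomputable def gn (H σ : ℝ) (n : ℕ) : ℝ :=
  σ * cH H * (H - 1/2) *
    ∫ x in ((n : ℝ) - 1)..(n : ℝ),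
      x ^ ((1:ℝ)/2 - H) * ((n : ℝ) - x) ^ (H - 1/2) *
        ∫ y in (0:ℝ)..1, (y * ((n : ℝ) - x) + x) ^ (H - 1/2) * y ^ (H - 3/2)

/-! For `2 ≤ i ≤ n - 1` the integrand of `j_n(i)` is at least `n^(H-3/2)`: bound `x^(1/2-H)`
below by `(n-1)^(1/2-H)` and the inner integrand below by `(n-1)^(H-1/2) n^(H-3/2)`; the term
`i = 1`, where `x^(1/2-H)` is unbounded, is only used to be nonnegative. Hence
`∑ j_n(i) ≥ σ c_H (H - 1/2) (n - 2) n^(H-3/2)`, which grows like `n^(H-1/2)`. In `g_n` the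
inner integrand is at most `n^(H-1/2) y^(H-3/2)`, whose integral is `n^(H-1/2)/(H-1/2)`;
together with `x^(1/2-H) ≤ (n-1)^(1/2-H)` this gives
`g_n ≤ σ c_H (n/(n-1))^(H-1/2) ≤ 2 σ c_H`, uniformly in `n`. -/

open Set Filter Real
open scoped Interval

theorem MeasureTheory.StronglyMeasurable.intervalIntegral_prod_right {α E : Type*}
    [MeasurableSpace α] [NormedAddCommGroup E] [NormedSpace ℝ E] {μ : Measure ℝ} [SFinite μ]
    {K : α → ℝ → E} (hK : StronglyMeasurable (Function.uncurry K)) (a b : ℝ) :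
    StronglyMeasurable fun x => ∫ v in a..b, K x v ∂μ :=
  hK.integral_prod_right.sub hK.integral_prod_right

section UnitInterval

variable {f : ℝ → ℝ} {C r : ℝ}

theorem intervalIntegrable_of_le_mul_rpow (hr : -1 < r) (hfm : AEStronglyMeasurable f)
    (hf0 : ∀ v ∈ Ioc (0:ℝ) 1, 0 ≤ f v) (hfC : ∀ v ∈ Ioc (0:ℝ) 1, f v ≤ C * v ^ r) :
    IntervalIntegrable f volume 0 1 := by
  refine ((intervalIntegral.intervalIntegrable_rpow' hr).const_mul C).mono_fun' hfm.restrict ?_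
  rw [uIoc_of_le zero_le_one]
  filter_upwards [ae_restrict_mem measurableSet_Ioc] with v hv
  rw [Real.norm_of_nonneg (hf0 v hv)]
  exact hfC v hv

theorem integral_le_div_of_le_mul_rpow (hr : -1 < r)
    (hf0 : ∀ v ∈ Ioc (0:ℝ) 1, 0 ≤ f v) (hfC : ∀ v ∈ Ioc (0:ℝ) 1, f v ≤ C * v ^ r) :
    ∫ v in (0:ℝ)..1, f v ≤ C / (r + 1) := by
  have hbound : ∀ᵐ v, v ∈ Ioc (0:ℝ) 1 → ‖f v‖ ≤ C * v ^ r :=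
    ae_of_all _ fun v hv => by
      rw [Real.norm_of_nonneg (hf0 v hv)]
      exact hfC v hv
  calc ∫ v in (0:ℝ)..1, f v ≤ ‖∫ v in (0:ℝ)..1, f v‖ := Real.le_norm_self _
    _ ≤ ∫ v in (0:ℝ)..1, C * v ^ r :=
      intervalIntegral.norm_integral_le_of_norm_le zero_le_one hbound
        ((intervalIntegral.intervalIntegrable_rpow' hr).const_mul C)
    _ = C / (r + 1) := by
      rw [intervalIntegral.integral_const_mul, integral_rpow (.inl hr), one_rpow,
        zero_rpow (by linarith : (0:ℝ) < r + 1).ne']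
      ring

end UnitInterval

theorem mul_sub_le_integral_of_le {f : ℝ → ℝ} {a b c : ℝ} (hab : a ≤ b)
    (hf : IntervalIntegrable f volume a b) (h : ∀ x ∈ Ioo a b, c ≤ f x) :
    c * (b - a) ≤ ∫ x in a..b, f x := by
  simpa [mul_comm] using
    intervalIntegral.integral_mono_on_of_le_Ioo hab intervalIntegrable_const hf h

theorem rpow_neg_mul_rpow_le_two {N a : ℝ} (hN : 2 ≤ N) (ha1 : a ≤ 1) :
    (N - 1) ^ (-a) * N ^ a ≤ 2 := by
  rw [rpow_neg (by linarith), ← div_eq_inv_mul, ← div_rpow (by linarith) (by linarith)]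
  have hq : 1 ≤ N / (N - 1) := by rw [one_le_div (by linarith)]; linarith
  calc (N / (N - 1)) ^ a ≤ N / (N - 1) := rpow_le_self_of_one_le hq ha1
    _ ≤ 2 := by rw [div_le_iff₀ (by linarith)]; linarith

theorem eventually_lt_sub_two_mul_mul_rpow {a : ℝ} (ha : 0 < a) (C : ℝ) :
    ∀ᶠ n : ℕ in atTop, C < ((n:ℝ) - 2) * (a * (n:ℝ) ^ (a - 1)) := by
  have htend : Tendsto (fun n : ℕ => (n:ℝ) ^ a) atTop atTop :=
    (tendsto_rpow_atTop ha).comp tendsto_natCast_atTop_atTop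
  filter_upwards [htend.eventually_gt_atTop (2 * C / a), eventually_ge_atTop 4] with n hlarge hn4
  have hn : (4:ℝ) ≤ n := by exact_mod_cast hn4
  have hpow : (n:ℝ) ^ a = n * n ^ (a - 1) := by
    rw [← rpow_one_add' (by linarith) (by linarith), add_sub_cancel]
  have ht : 0 < a * (n:ℝ) ^ (a - 1) := mul_pos ha (rpow_pos_of_pos (by linarith) _)
  rw [div_lt_iff₀ ha, hpow] at hlarge
  nlinarith

theorem cH_pos {H : ℝ} (h1 : 1/2 < H) (h2 : H < 1) : 0 < cH H := by
  unfold cH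
  apply Real.sqrt_pos.mpr
  have hΓ₁ := Real.Gamma_pos_of_pos (by linarith : 0 < 3/2 - H)
  have hΓ₂ := Real.Gamma_pos_of_pos (by linarith : 0 < H + 1/2)
  have hΓ₃ := Real.Gamma_pos_of_pos (by linarith : 0 < 2 - 2*H)
  exact div_pos (mul_pos (by linarith) hΓ₁) (mul_pos hΓ₂ hΓ₃)

theorem cH_nonneg (H : ℝ) : 0 ≤ cH H :=
  Real.sqrt_nonneg _

noncomputable def jnKernel (H N x v : ℝ) : ℝ :=
  (v + N - 1) ^ (H - 1/2) * (v + N - 1 - x) ^ (H - 3/2)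

noncomputable def gnKernel (H N x y : ℝ) : ℝ :=
  (y * (N - x) + x) ^ (H - 1/2) * y ^ (H - 3/2)

theorem jn_eq (H σ : ℝ) (n i : ℕ) :
    jn H σ n i = σ * cH H * (H - 1/2) *
      ∫ x in ((i : ℝ) - 1)..(i : ℝ),
        x ^ ((1:ℝ)/2 - H) * ∫ v in (0:ℝ)..1, jnKernel H n x v :=
  rfl

theorem gn_eq (H σ : ℝ) (n : ℕ) :
    gn H σ n = σ * cH H * (H - 1/2) *
      ∫ x in ((n : ℝ) - 1)..(n : ℝ),
        x ^ ((1:ℝ)/2 - H) * ((n : ℝ) - x) ^ (H - 1/2) * ∫ y in (0:ℝ)..1, gnKernel H n x y :=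
  rfl

section Kernels

variable {H N x : ℝ}

theorem jnKernel_nonneg (hx0 : 0 ≤ x) (hxN : x ≤ N - 1) {v : ℝ} (hv : 0 ≤ v) :
    0 ≤ jnKernel H N x v :=
  mul_nonneg (rpow_nonneg (by linarith) _) (rpow_nonneg (by linarith) _)

theorem jnKernel_le (h1 : 1/2 ≤ H) (h2 : H ≤ 3/2) (hx0 : 0 ≤ x) (hxN : x ≤ N - 1) {v : ℝ}
    (hv : v ∈ Ioc (0:ℝ) 1) : jnKernel H N x v ≤ N ^ (H - 1/2) * v ^ (H - 3/2) := by
  obtain ⟨hv0, hv1⟩ := hv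
  exact mul_le_mul (rpow_le_rpow (by linarith) (by linarith) (by linarith))
    (rpow_le_rpow_of_nonpos hv0 (by linarith) (by linarith))
    (rpow_nonneg (by linarith) _) (rpow_nonneg (by linarith) _)

theorem le_jnKernel (h1 : 1/2 ≤ H) (h2 : H ≤ 3/2) (hx0 : 0 ≤ x) (hxN : x ≤ N - 1) {v : ℝ}
    (hv : v ∈ Ioc (0:ℝ) 1) : (N - 1) ^ (H - 1/2) * N ^ (H - 3/2) ≤ jnKernel H N x v := by
  obtain ⟨hv0, hv1⟩ := hv
  exact mul_le_mul (rpow_le_rpow (by linarith) (by linarith) (by linarith))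
    (rpow_le_rpow_of_nonpos (by linarith) (by linarith) (by linarith))
    (rpow_nonneg (by linarith) _) (rpow_nonneg (by linarith) _)

theorem gnKernel_nonneg (hx0 : 0 ≤ x) (hxN : x ≤ N) {y : ℝ} (hy : y ∈ Icc (0:ℝ) 1) :
    0 ≤ gnKernel H N x y := by
  obtain ⟨hy0, hy1⟩ := hy
  exact mul_nonneg (rpow_nonneg (by nlinarith) _) (rpow_nonneg hy0 _)

theorem gnKernel_le (h1 : 1/2 ≤ H) (hx0 : 0 ≤ x) (hxN : x ≤ N) {y : ℝ}
    (hy : y ∈ Icc (0:ℝ) 1) : gnKernel H N x y ≤ N ^ (H - 1/2) * y ^ (H - 3/2) := by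
  obtain ⟨hy0, hy1⟩ := hy
  exact mul_le_mul_of_nonneg_right (rpow_le_rpow (by nlinarith) (by nlinarith) (by linarith))
    (rpow_nonneg hy0 _)

theorem intervalIntegrable_jnKernel (h1 : 1/2 < H) (h2 : H ≤ 3/2) (hx0 : 0 ≤ x)
    (hxN : x ≤ N - 1) :
    IntervalIntegrable (jnKernel H N x) volume 0 1 :=
  intervalIntegrable_of_le_mul_rpow (by linarith)
    (Measurable.aestronglyMeasurable (by unfold jnKernel; fun_prop))
    (fun _ hv => jnKernel_nonneg hx0 hxN hv.1.le) (fun _ => jnKernel_le h1.le h2 hx0 hxN)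

theorem integral_jnKernel_le (h1 : 1/2 < H) (h2 : H ≤ 3/2) (hx0 : 0 ≤ x) (hxN : x ≤ N - 1) :
    ∫ v in (0:ℝ)..1, jnKernel H N x v ≤ N ^ (H - 1/2) / (H - 1/2) := by
  have := integral_le_div_of_le_mul_rpow (by linarith : (-1:ℝ) < H - 3/2)
    (fun _ hv => jnKernel_nonneg hx0 hxN hv.1.le) (fun _ => jnKernel_le h1.le h2 hx0 hxN)
  rwa [show H - 3/2 + 1 = H - 1/2 by ring] at this

theorem le_integral_jnKernel (h1 : 1/2 < H) (h2 : H ≤ 3/2) (hx0 : 0 ≤ x) (hxN : x ≤ N - 1) :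
    (N - 1) ^ (H - 1/2) * N ^ (H - 3/2) ≤ ∫ v in (0:ℝ)..1, jnKernel H N x v := by
  simpa using mul_sub_le_integral_of_le zero_le_one (intervalIntegrable_jnKernel h1 h2 hx0 hxN)
    fun _ hv => le_jnKernel h1.le h2 hx0 hxN (Ioo_subset_Ioc_self hv)

theorem integral_gnKernel_le (h1 : 1/2 < H) (hx0 : 0 ≤ x) (hxN : x ≤ N) :
    ∫ y in (0:ℝ)..1, gnKernel H N x y ≤ N ^ (H - 1/2) / (H - 1/2) := by
  have := integral_le_div_of_le_mul_rpow (by linarith : (-1:ℝ) < H - 3/2)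
    (fun _ hy => gnKernel_nonneg hx0 hxN (Ioc_subset_Icc_self hy))
    (fun _ hy => gnKernel_le h1.le hx0 hxN (Ioc_subset_Icc_self hy))
  rwa [show H - 3/2 + 1 = H - 1/2 by ring] at this

theorem integral_gnKernel_nonneg (hx0 : 0 ≤ x) (hxN : x ≤ N) :
    0 ≤ ∫ y in (0:ℝ)..1, gnKernel H N x y :=
  intervalIntegral.integral_nonneg zero_le_one fun _ hy => gnKernel_nonneg hx0 hxN hy

end Kernels

section Coefficients

variable {H σ : ℝ}

theorem jn_nonneg (h1 : 1/2 ≤ H) (hσ : 0 ≤ σ) {n i : ℕ} (hi : 1 ≤ i) (hin : i < n) :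
    0 ≤ jn H σ n i := by
  have hi1 : (1:ℝ) ≤ i := by exact_mod_cast hi
  have hin' : (i:ℝ) ≤ n - 1 := by
    rw [le_sub_iff_add_le]; exact_mod_cast hin
  rw [jn_eq]
  refine mul_nonneg (mul_nonneg (mul_nonneg hσ (cH_nonneg H)) (by linarith))
    (intervalIntegral.integral_nonneg (by linarith) fun x hx => ?_)
  refine mul_nonneg (rpow_nonneg (by linarith [hx.1]) _)
    (intervalIntegral.integral_nonneg zero_le_one fun v hv => ?_)
  exact jnKernel_nonneg (by linarith [hx.1]) (by linarith [hx.2]) hv.1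

theorem intervalIntegrable_jn_integrand (h1 : 1/2 < H) (h2 : H ≤ 3/2) {N a b : ℝ}
    (ha : 1 ≤ a) (hab : a ≤ b) (hb : b ≤ N - 1) :
    IntervalIntegrable (fun x => x ^ ((1:ℝ)/2 - H) * ∫ v in (0:ℝ)..1, jnKernel H N x v)
      volume a b := by
  have hmeas : StronglyMeasurable fun x => ∫ v in (0:ℝ)..1, jnKernel H N x v :=
    StronglyMeasurable.intervalIntegral_prod_right
      (Measurable.stronglyMeasurable (by unfold jnKernel; fun_prop)) 0 1
  refine (intervalIntegrable_const (c := N ^ (H - 1/2) / (H - 1/2))).mono_fun'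
    ((by fun_prop : Measurable fun x : ℝ => x ^ ((1:ℝ)/2 - H)).aestronglyMeasurable.mul
      hmeas.aestronglyMeasurable) ?_
  rw [uIoc_of_le hab]
  filter_upwards [ae_restrict_mem measurableSet_Ioc] with x ⟨hax, hxb⟩
  have hx0 : 0 ≤ x := by linarith
  have hxN : x ≤ N - 1 := by linarith
  have hpow : x ^ ((1:ℝ)/2 - H) ≤ 1 :=
    rpow_le_one_of_one_le_of_nonpos (by linarith) (by linarith)
  have hI := integral_jnKernel_le h1 h2 hx0 hxN
  have hI0 : 0 ≤ ∫ v in (0:ℝ)..1, jnKernel H N x v :=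
    intervalIntegral.integral_nonneg zero_le_one fun v hv => jnKernel_nonneg hx0 hxN hv.1
  rw [Real.norm_of_nonneg (mul_nonneg (rpow_nonneg hx0 _) hI0)]
  nlinarith

theorem jn_ge (h1 : 1/2 < H) (h2 : H ≤ 3/2) (hσ : 0 ≤ σ) {n i : ℕ} (hi : 2 ≤ i)
    (hin : i < n) :
    σ * cH H * (H - 1/2) * (n:ℝ) ^ (H - 3/2) ≤ jn H σ n i := by
  have hi2 : (2:ℝ) ≤ i := by exact_mod_cast hi
  have hin' : (i:ℝ) ≤ n - 1 := by
    rw [le_sub_iff_add_le]; exact_mod_cast hin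
  rw [jn_eq]
  refine mul_le_mul_of_nonneg_left ?_ (mul_nonneg (mul_nonneg hσ (cH_nonneg H)) (by linarith))
  have hlow : ∀ x ∈ Ioo ((i:ℝ) - 1) i,
      (n:ℝ) ^ (H - 3/2) ≤ x ^ ((1:ℝ)/2 - H) * ∫ v in (0:ℝ)..1, jnKernel H n x v := by
    rintro x ⟨hix, hxi⟩
    have hx0 : 0 ≤ x := by linarith
    have hxN : x ≤ n - 1 := by linarith
    have hcancel : ((n:ℝ) - 1) ^ ((1:ℝ)/2 - H) * ((n:ℝ) - 1) ^ (H - 1/2) = 1 := by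
      rw [← rpow_add (by linarith), show (1:ℝ)/2 - H + (H - 1/2) = 0 by ring, rpow_zero]
    calc (n:ℝ) ^ (H - 3/2)
        = ((n:ℝ) - 1) ^ ((1:ℝ)/2 - H) * (((n:ℝ) - 1) ^ (H - 1/2) * (n:ℝ) ^ (H - 3/2)) := by
          rw [← mul_assoc, hcancel, one_mul]
      _ ≤ x ^ ((1:ℝ)/2 - H) * ∫ v in (0:ℝ)..1, jnKernel H n x v :=
          mul_le_mul (rpow_le_rpow_of_nonpos (by linarith) hxN (by linarith))
            (le_integral_jnKernel h1 h2 hx0 hxN)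
            (mul_nonneg (rpow_nonneg (by linarith) _) (rpow_nonneg (by linarith) _))
            (rpow_nonneg hx0 _)
  simpa using mul_sub_le_integral_of_le (by linarith)
    (intervalIntegrable_jn_integrand h1 h2 (by linarith) (by linarith) hin') hlow

theorem sum_jn_ge (h1 : 1/2 < H) (h2 : H ≤ 3/2) (hσ : 0 ≤ σ) {n : ℕ} (hn : 2 ≤ n) :
    ((n:ℝ) - 2) * (σ * cH H * (H - 1/2) * (n:ℝ) ^ (H - 3/2))
      ≤ ∑ i ∈ Finset.Icc 1 (n - 1), jn H σ n i := by
  have hcard : (Finset.Icc 2 (n - 1)).card = n - 2 := by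
    rw [Nat.card_Icc]; omega
  calc ((n:ℝ) - 2) * (σ * cH H * (H - 1/2) * (n:ℝ) ^ (H - 3/2))
      = (Finset.Icc 2 (n - 1)).card • (σ * cH H * (H - 1/2) * (n:ℝ) ^ (H - 3/2)) := by
        rw [nsmul_eq_mul, hcard, Nat.cast_sub hn, Nat.cast_ofNat]
    _ ≤ ∑ i ∈ Finset.Icc 2 (n - 1), jn H σ n i :=
        Finset.card_nsmul_le_sum _ _ _ fun i hi => by
          rw [Finset.mem_Icc] at hi
          exact jn_ge h1 h2 hσ hi.1 (by omega)
    _ ≤ ∑ i ∈ Finset.Icc 1 (n - 1), jn H σ n i :=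
        Finset.sum_le_sum_of_subset_of_nonneg (Finset.Icc_subset_Icc_left one_le_two)
          fun i hi _ => by
            rw [Finset.mem_Icc] at hi
            exact jn_nonneg h1.le hσ hi.1 (by omega)

theorem gn_le (h1 : 1/2 < H) (h2 : H ≤ 3/2) (hσ : 0 ≤ σ) {n : ℕ} (hn : 2 ≤ n) :
    gn H σ n ≤ 2 * (σ * cH H) := by
  have hN : (2:ℝ) ≤ n := by exact_mod_cast hn
  rw [gn_eq]
  set N : ℝ := (n : ℝ)
  set C := (N - 1) ^ ((1:ℝ)/2 - H) * (N ^ (H - 1/2) / (H - 1/2))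
  have hbound : ∀ x ∈ Ι (N - 1) N, ‖x ^ ((1:ℝ)/2 - H) * (N - x) ^ (H - 1/2) *
      ∫ y in (0:ℝ)..1, gnKernel H N x y‖ ≤ C := by
    rw [uIoc_of_le (by linarith)]
    rintro x ⟨hx1, hxN⟩
    have hx0 : 0 ≤ x := by linarith
    have hI0 := integral_gnKernel_nonneg (H := H) hx0 hxN
    rw [Real.norm_of_nonneg (by positivity)]
    calc x ^ ((1:ℝ)/2 - H) * (N - x) ^ (H - 1/2) * ∫ y in (0:ℝ)..1, gnKernel H N x y
        ≤ ((N - 1) ^ ((1:ℝ)/2 - H) * 1) * (N ^ (H - 1/2) / (H - 1/2)) :=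
          mul_le_mul
            (mul_le_mul (rpow_le_rpow_of_nonpos (by linarith) hx1.le (by linarith))
              (rpow_le_one (by linarith) (by linarith) (by linarith))
              (rpow_nonneg (by linarith) _) (rpow_nonneg (by linarith) _))
            (integral_gnKernel_le h1 hx0 hxN) hI0
            (mul_nonneg (rpow_nonneg (by linarith) _) zero_le_one)
      _ = C := by ring
  have hint :=
    (Real.le_norm_self _).trans (intervalIntegral.norm_integral_le_of_norm_le_const hbound)
  rw [show N - (N - 1) = 1 by ring, abs_one, mul_one] at hint
  have hfactor : (N - 1) ^ ((1:ℝ)/2 - H) * N ^ (H - 1/2) ≤ 2 := by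
    rw [show (1:ℝ)/2 - H = -(H - 1/2) by ring]
    exact rpow_neg_mul_rpow_le_two hN (by linarith)
  have hA : 0 ≤ σ * cH H := mul_nonneg hσ (cH_nonneg H)
  calc _ ≤ σ * cH H * (H - 1/2) * C :=
        mul_le_mul_of_nonneg_left hint (mul_nonneg hA (by linarith))
    _ = σ * cH H * ((N - 1) ^ ((1:ℝ)/2 - H) * N ^ (H - 1/2)) * ((H - 1/2) / (H - 1/2)) := by
        simp only [C]; ring
    _ = σ * cH H * ((N - 1) ^ ((1:ℝ)/2 - H) * N ^ (H - 1/2)) := by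
        rw [div_self (by linarith), mul_one]
    _ ≤ 2 * (σ * cH H) := by nlinarith

end Coefficients

/-- Sottinen's key estimate: there is `n_H ≥ 2` such that for all `n ≥ n_H` the sum
`∑_{i=1}^{n-1} j_n(i)` dominates `g_n`; equivalently, the up-jump value
`u_n^{(N)}(-1,…,-1) = (-∑_{i=1}^{n-1} j_n(i) + g_n)/N^H` is strictly negative for `N ≥ n`. -/
theorem exists_nH (H σ : ℝ) (hH : H ∈ Set.Ioo (1/2 : ℝ) 1) (hσ : 0 < σ) :
    ∃ nH : ℕ, 2 ≤ nH ∧ ∀ n : ℕ, nH ≤ n →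
      0 < (∑ i ∈ Finset.Icc 1 (n - 1), jn H σ n i) - gn H σ n ∧
      ∀ N : ℕ, n ≤ N →
        (-(∑ i ∈ Finset.Icc 1 (n - 1), jn H σ n i) + gn H σ n) / (N : ℝ) ^ H < 0 := by
  obtain ⟨h1, h2⟩ := hH
  obtain ⟨n₀, hn₀⟩ := eventually_atTop.mp <| (eventually_ge_atTop 2).and
    (eventually_lt_sub_two_mul_mul_rpow (sub_pos.mpr h1) 2)
  refine ⟨max n₀ 2, le_max_right _ _, fun n hn => ?_⟩
  obtain ⟨hn2, hlarge⟩ := hn₀ n (le_of_max_le_left hn)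
  rw [show H - 1/2 - 1 = H - 3/2 by ring] at hlarge
  have hsum := sum_jn_ge h1 (by linarith) hσ.le hn2
  have hg := gn_le h1 (by linarith) hσ.le hn2
  have hc : 0 < σ * cH H := mul_pos hσ (cH_pos h1 h2)
  have hpos : 0 < (∑ i ∈ Finset.Icc 1 (n - 1), jn H σ n i) - gn H σ n := by nlinarith
  refine ⟨hpos, fun N hN => div_neg_of_neg_of_pos (by linarith) (rpow_pos_of_pos ?_ _)⟩
  exact_mod_cast (by omega : 0 < N)
end

section
/- Fix an integer n_H ≥ 2 such that θ := ∑_{i=1}^{n_H−1} j_{n_H}(i) − g_{n_H} > 0, and fix s₀ > 0. Let (λ_N) be a sequence with 0 < λ_N < 1 and λ_N·N^H → 0, and let (q_N) be a sequence of strictly positive reals with q_N/N^H → ∞ and λ_N·q_N → 0. Then: (i) S_{n_H−1}^{(N)}(−1,…,−1) → s₀ as N → ∞; (ii) C_N := q_N·(−λ_N + θ/N^H)·S_{n_H−1}^{(N)}(−1,…,−1) → ∞; (iii) c_N := λ_N·q_N·S_{n_H−1}^{(N)}(−1,…,−1) → 0; and (iv) for all N sufficiently large and both x ∈ {−1,1},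 q_N·((1−λ_N)·S_{n_H−1}^{(N)}(−1,…,−1) − S_{n_H}^{(N)}(−1,…,−1,x)) ≥ C_N. (Hence the scaled 1-step strategies provide an asymptotic arbitrage of the first kind with transaction costs λ_N.) -/
open MeasureTheory

/-- The stock price in the `N`-fractional binary market after `n` steps along the
sign path `x` (indexed from 1):
`S_n^{(N)}(x) = s₀ ∏_{k=1}^n (1 + (∑_{i=1}^{k-1} j_k(i) x_i + g_k x_k)/N^H)`. -/
noncomputable def Sp (H σ : ℝ) (N : ℕ) (s₀ : ℝ) (n : ℕ) (x : ℕ → ℝ) : ℝ :=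
  s₀ * ∏ k ∈ Finset.Icc 1 n,
    (1 + ((∑ i ∈ Finset.Icc 1 (k - 1), jn H σ k i * x i) + gn H σ k * x k) / (N : ℝ) ^ H)

open Filter Topology

/-
A path that stays at `-1` before the last step gives `S_{n_H-1}^{(N)} → s₀`, since every
factor of the product is `1 + O(N^{-H})`. The last step changes the price by the factor
`1 + (-J + g x)/N^H` with `J = ∑ j_{n_H}(i)` and `g = g_{n_H} ≥ 0`, so selling one unit of
stock at time `n_H - 1` and buying it back at time `n_H` earns at least `(θ/N^H - λ_N) S`
whatever `x ∈ {-1, 1}` is. Scaled by `q_N`, this gain tends to `∞` because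
`q_N/N^H → ∞` and `λ_N q_N → 0`.
-/

lemma tendsto_prod_one_add_div_atTop {ι α : Type*} {l : Filter α} (s : Finset ι)
    (a : ι → ℝ) {t : α → ℝ} (ht : Tendsto t l atTop) :
    Tendsto (fun N => ∏ k ∈ s, (1 + a k / t N)) l (𝓝 1) := by
  rw [← Finset.prod_const_one (s := s)]
  refine tendsto_finsetProd s fun k _ => ?_
  simpa using tendsto_const_nhds.add (tendsto_const_nhds.div_atTop ht)

lemma tendsto_Sp {H : ℝ} (hH : 0 < H) (σ s₀ : ℝ) (n : ℕ) (x : ℕ → ℝ) :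
    Tendsto (fun N : ℕ => Sp H σ N s₀ n x) atTop (𝓝 s₀) := by
  have hprod := tendsto_prod_one_add_div_atTop (Finset.Icc 1 n)
    (fun k => (∑ i ∈ Finset.Icc 1 (k - 1), jn H σ k i * x i) + gn H σ k * x k)
    ((tendsto_rpow_atTop hH).comp tendsto_natCast_atTop_atTop)
  simpa [Sp] using tendsto_const_nhds.mul hprod

lemma Sp_congr {H σ : ℝ} {N : ℕ} {s₀ : ℝ} {n : ℕ} {x y : ℕ → ℝ}
    (h : ∀ i ∈ Finset.Icc 1 n, x i = y i) : Sp H σ N s₀ n x = Sp H σ N s₀ n y := by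
  unfold Sp
  congr 1
  refine Finset.prod_congr rfl fun k hk => ?_
  have hsum : ∑ i ∈ Finset.Icc 1 (k - 1), jn H σ k i * x i
      = ∑ i ∈ Finset.Icc 1 (k - 1), jn H σ k i * y i :=
    Finset.sum_congr rfl fun i hi => by
      rw [h i (by simp only [Finset.mem_Icc] at hi hk ⊢; omega)]
  rw [hsum, h k hk]

lemma Sp_succ (H σ : ℝ) (N : ℕ) (s₀ : ℝ) (n : ℕ) (x : ℕ → ℝ) :
    Sp H σ N s₀ (n + 1) x = Sp H σ N s₀ n x *
      (1 + ((∑ i ∈ Finset.Icc 1 n, jn H σ (n + 1) i * x i) + gn H σ (n + 1) * x (n + 1))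
        / (N : ℝ) ^ H) := by
  simp only [Sp]
  rw [Finset.prod_Icc_succ_top (Nat.le_add_left 1 n), Nat.add_sub_cancel, mul_assoc]

lemma Sp_of_neg_one_then {n : ℕ} (hn : 1 ≤ n) (H σ : ℝ) (N : ℕ) (s₀ x : ℝ) :
    Sp H σ N s₀ n (fun i => if i = n then x else -1) = Sp H σ N s₀ (n - 1) (fun _ => -1) *
      (1 + (-(∑ i ∈ Finset.Icc 1 (n - 1), jn H σ n i) + gn H σ n * x) / (N : ℝ) ^ H) := by
  obtain ⟨m, rfl⟩ : ∃ m, n = m + 1 := ⟨n - 1, by omega⟩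
  rw [Sp_succ, Nat.add_sub_cancel, if_pos rfl,
    Sp_congr fun i hi => if_neg (by simp only [Finset.mem_Icc] at hi; omega),
    Finset.sum_congr rfl fun i hi => by
    rw [if_neg (by simp only [Finset.mem_Icc] at hi; omega), mul_neg_one],
    Finset.sum_neg_distrib]

lemma gn_nonneg {H σ : ℝ} (hH : 1/2 ≤ H) (hσ : 0 ≤ σ) {n : ℕ} (hn : 1 ≤ n) :
    0 ≤ gn H σ n := by
  have hn1 : (1:ℝ) ≤ n := by exact_mod_cast hn
  have hc : 0 ≤ cH H := Real.sqrt_nonneg _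
  have hH' : 0 ≤ H - 1/2 := by linarith
  refine mul_nonneg (by positivity) ?_
  refine intervalIntegral.integral_nonneg (by linarith) fun x hx => ?_
  have hx0 : 0 ≤ x := by linarith [hx.1]
  have hnx : 0 ≤ (n:ℝ) - x := by linarith [hx.2]
  refine mul_nonneg (by positivity) (intervalIntegral.integral_nonneg zero_le_one fun y hy => ?_)
  have : 0 ≤ y * ((n:ℝ) - x) + x := by nlinarith [hy.1]
  have := hy.1
  positivity

lemma mul_neg_add_sub_div_mul_le {q l J g t S x : ℝ} (hgain : 0 ≤ q * S * g / t) (hx : x ≤ 1) :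
    q * (-l + (J - g) / t) * S ≤ q * ((1 - l) * S - S * (1 + (-J + g * x) / t)) := by
  have hdiff : q * ((1 - l) * S - S * (1 + (-J + g * x) / t)) - q * (-l + (J - g) / t) * S
      = q * S * g / t * (1 - x) := by ring
  linarith [mul_nonneg hgain (sub_nonneg.mpr hx)]

theorem asymptotic_arbitrage_first_kind_general (H σ : ℝ) (hH : H ∈ Set.Ioo (1/2 : ℝ) 1)
    (hσ : 0 < σ) (nH : ℕ) (hnH : 2 ≤ nH)
    (hθ : 0 < (∑ i ∈ Finset.Icc 1 (nH - 1), jn H σ nH i) - gn H σ nH)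
    (s₀ : ℝ) (hs₀ : 0 < s₀) (lam q : ℕ → ℝ)
    (hq : ∀ N, 0 < q N)
    (hqlim : Filter.Tendsto (fun N : ℕ => q N / (N : ℝ) ^ H) Filter.atTop Filter.atTop)
    (hlamq : Filter.Tendsto (fun N : ℕ => lam N * q N) Filter.atTop (nhds 0)) :
    Filter.Tendsto (fun N : ℕ => Sp H σ N s₀ (nH - 1) (fun _ => -1)) Filter.atTop (nhds s₀) ∧
    Filter.Tendsto
      (fun N : ℕ => q N * (-lam N +
          ((∑ i ∈ Finset.Icc 1 (nH - 1), jn H σ nH i) - gn H σ nH) / (N : ℝ) ^ H)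
        * Sp H σ N s₀ (nH - 1) (fun _ => -1))
      Filter.atTop Filter.atTop ∧
    Filter.Tendsto
      (fun N : ℕ => lam N * q N * Sp H σ N s₀ (nH - 1) (fun _ => -1))
      Filter.atTop (nhds 0) ∧
    ∃ N₀ : ℕ, ∀ N : ℕ, N₀ ≤ N → ∀ x : ℝ, x = -1 ∨ x = 1 →
      q N * (-lam N +
          ((∑ i ∈ Finset.Icc 1 (nH - 1), jn H σ nH i) - gn H σ nH) / (N : ℝ) ^ H)
        * Sp H σ N s₀ (nH - 1) (fun _ => -1)
      ≤ q N * ((1 - lam N) * Sp H σ N s₀ (nH - 1) (fun _ => -1)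
          - Sp H σ N s₀ nH (fun i => if i = nH then x else -1)) := by
  have hS := tendsto_Sp (one_half_pos.trans hH.1) σ s₀ (nH - 1) (fun _ => -1)
  refine ⟨hS, ?_, by simpa using hlamq.mul hS, ?_⟩
  · have hgain : Tendsto (fun N : ℕ => q N * (-lam N +
        ((∑ i ∈ Finset.Icc 1 (nH - 1), jn H σ nH i) - gn H σ nH) / (N : ℝ) ^ H))
        atTop atTop :=
      (hlamq.neg.add_atTop (hqlim.const_mul_atTop hθ)).congr fun N => by ring
    exact hgain.atTop_mul_pos hs₀ hS
  · obtain ⟨N₀, hS_pos⟩ := eventually_atTop.mp (hS.eventually (eventually_gt_nhds hs₀))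
    refine ⟨N₀, fun N hN x hx => ?_⟩
    rw [Sp_of_neg_one_then (by omega)]
    have hg := gn_nonneg hH.1.le hσ.le (n := nH) (by omega)
    refine mul_neg_add_sub_div_mul_le ?_ (by rcases hx with rfl | rfl <;> norm_num)
    exact div_nonneg (mul_nonneg (mul_nonneg (hq N).le (hS_pos N hN).le) hg) (by positivity)

/-- Theorem 5.1: the scaled 1-step strategies provide an asymptotic arbitrage of the
first kind with transaction costs `λ_N = o(1/N^H)`, scaling by `q_N` units of stock with
`q_N / N^H → ∞` and `λ_N q_N → 0`. -/
theorem asymptotic_arbitrage_first_kind (H σ : ℝ) (hH : H ∈ Set.Ioo (1/2 : ℝ) 1)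
    (hσ : 0 < σ) (nH : ℕ) (hnH : 2 ≤ nH)
    (hθ : 0 < (∑ i ∈ Finset.Icc 1 (nH - 1), jn H σ nH i) - gn H σ nH)
    (s₀ : ℝ) (hs₀ : 0 < s₀) (lam q : ℕ → ℝ)
    (hlam : ∀ N, lam N ∈ Set.Ioo (0:ℝ) 1) (hq : ∀ N, 0 < q N)
    (hlamlim : Filter.Tendsto (fun N : ℕ => lam N * (N : ℝ) ^ H) Filter.atTop (nhds 0))
    (hqlim : Filter.Tendsto (fun N : ℕ => q N / (N : ℝ) ^ H) Filter.atTop Filter.atTop)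
    (hlamq : Filter.Tendsto (fun N : ℕ => lam N * q N) Filter.atTop (nhds 0)) :
    Filter.Tendsto (fun N : ℕ => Sp H σ N s₀ (nH - 1) (fun _ => -1)) Filter.atTop (nhds s₀) ∧
    Filter.Tendsto
      (fun N : ℕ => q N * (-lam N +
          ((∑ i ∈ Finset.Icc 1 (nH - 1), jn H σ nH i) - gn H σ nH) / (N : ℝ) ^ H)
        * Sp H σ N s₀ (nH - 1) (fun _ => -1))
      Filter.atTop Filter.atTop ∧
    Filter.Tendsto
      (fun N : ℕ => lam N * q N * Sp H σ N s₀ (nH - 1) (fun _ => -1))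
      Filter.atTop (nhds 0) ∧
    ∃ N₀ : ℕ, ∀ N : ℕ, N₀ ≤ N → ∀ x : ℝ, x = -1 ∨ x = 1 →
      q N * (-lam N +
          ((∑ i ∈ Finset.Icc 1 (nH - 1), jn H σ nH i) - gn H σ nH) / (N : ℝ) ^ H)
        * Sp H σ N s₀ (nH - 1) (fun _ => -1)
      ≤ q N * ((1 - lam N) * Sp H σ N s₀ (nH - 1) (fun _ => -1)
          - Sp H σ N s₀ nH (fun i => if i = nH then x else -1)) :=
  asymptotic_arbitrage_first_kind_general H σ hH hσ nH hnH hθ s₀ hs₀ lam q hq hqlim hlamq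
end
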